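/- Let V be a complex inner product space and R a Kähler curvature form on V with positive orthogonal bisectional curvature. Then for any two orthonormal vectors x, y ∈ V the sum of holomorphic sectional curvatures is positive: Re R(x,x,x,x) + Re R(y,y,y,y) > 0. -/

import Mathlib

/-- A Kähler curvature form on a complex inner product space `V`: a map
`R : V → V → V → V → ℂ` that is complex-linear in the first and third
arguments, conjugate-linear in the second and fourth arguments, and satisfies
the Kähler symmetries. -/
structure KahlerCurvatureForm (V : Type*) [NormedAddCommGroup V]
    [InnerProductSpace ℂ V] where
  R : V → V → V → V → ℂ
  add_fst : ∀ x x' y z w, R (x + x') y z w = R x y z w + R x' y z w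
  smul_fst : ∀ (c : ℂ) x y z w, R (c • x) y z w = c * R x y z w
  add_snd : ∀ x y y' z w, R x (y + y') z w = R x y z w + R x y' z w
  smul_snd : ∀ (c : ℂ) x y z w, R x (c • y) z w = (starRingEnd ℂ) c * R x y z w
  add_trd : ∀ x y z z' w, R x y (z + z') w = R x y z w + R x y z' w
  smul_trd : ∀ (c : ℂ) x y z w, R x y (c • z) w = c * R x y z w
  add_fth : ∀ x y z w w', R x y z (w + w') = R x y z w + R x y z w'
  smul_fth : ∀ (c : ℂ) x y z w, R x y z (c • w) = (starRingEnd ℂ) c * R x y z w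
  sym_fst_trd : ∀ x y z w, R x y z w = R z y x w
  sym_snd_fth : ∀ x y z w, R x y z w = R x w z y
  conj_sym : ∀ x y z w, R x y z w = (starRingEnd ℂ) (R y x w z)

/-- `R` has positive orthogonal bisectional curvature if `Re R(x,x,y,y) > 0`
for all nonzero orthogonal vectors `x, y`. -/
def KahlerCurvatureForm.PosOrthBisectional {V : Type*} [NormedAddCommGroup V]
    [InnerProductSpace ℂ V] (R : KahlerCurvatureForm V) : Prop :=
  ∀ x y : V, x ≠ 0 → y ≠ 0 → inner ℂ x y = (0 : ℂ) → 0 < (R.R x x y y).re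


/-!
Write `B(u, v) = R(u, u, v, v)`. For orthonormal `x, y` the pairs `(x + y, x - y)` and
`(x + i y, x - i y)` are orthogonal pairs of nonzero vectors, so both bisectional curvatures
are positive. Expanding by sesquilinearity, the cross terms cancel in the sum by the Kähler
symmetries, and `B(x + y, x - y) + B(x + i y, x - i y) = 2 R(x, x, x, x) + 2 R(y, y, y, y)`.
-/

open Complex

section InnerProduct

variable {𝕜 E : Type*} [RCLike 𝕜] [NormedAddCommGroup E] [InnerProductSpace 𝕜 E] {x y : E}

theorem add_ne_zero_of_inner_eq_zero (hx : x ≠ 0) (h : inner 𝕜 x y = 0) : x + y ≠ 0 := by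
  have hpos : 0 < ‖x + y‖ * ‖x + y‖ := by
    rw [norm_add_sq_eq_norm_sq_add_norm_sq_of_inner_eq_zero (𝕜 := 𝕜) x y h]
    have hx' := norm_pos_iff.2 hx
    positivity
  exact norm_pos_iff.1 (pos_of_mul_pos_left hpos (norm_nonneg _))

theorem inner_add_sub_eq_zero_of_inner_eq_zero (hn : ‖x‖ = ‖y‖) (h : inner 𝕜 x y = 0) :
    inner 𝕜 (x + y) (x - y) = 0 := by
  have hyx : inner 𝕜 y x = 0 := by rw [← inner_conj_symm, h, map_zero]
  rw [inner_add_left, inner_sub_right, inner_sub_right, inner_self_eq_norm_sq_to_K (𝕜 := 𝕜) x,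
    inner_self_eq_norm_sq_to_K (𝕜 := 𝕜) y, hn, h, hyx]
  ring

end InnerProduct

namespace KahlerCurvatureForm

variable {V : Type*} [NormedAddCommGroup V] [InnerProductSpace ℂ V] (R : KahlerCurvatureForm V)

theorem sub_trd (x y z z' w : V) : R.R x y (z - z') w = R.R x y z w - R.R x y z' w := by
  rw [sub_eq_add_neg, R.add_trd, ← neg_one_smul ℂ z', R.smul_trd]; ring

theorem sub_fth (x y z w w' : V) : R.R x y z (w - w') = R.R x y z w - R.R x y z w' := by
  rw [sub_eq_add_neg, R.add_fth, ← neg_one_smul ℂ w', R.smul_fth, map_neg, map_one]; ring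

theorem add_sub_add_I_smul_sub_I_smul (x y : V) :
    R.R (x + y) (x + y) (x - y) (x - y)
      + R.R (x + I • y) (x + I • y) (x - I • y) (x - I • y)
      = 2 * R.R x x x x + 2 * R.R y y y y := by
  simp only [R.add_fst, R.add_snd, R.sub_trd, R.sub_fth, R.smul_fst, R.smul_snd, R.smul_trd,
    R.smul_fth, conj_I]
  -- each rewrite turns a cross term into the one it cancels against
  rw [R.sym_fst_trd y x x x, R.sym_snd_fth x y x x, R.sym_fst_trd y x x y,
    R.sym_fst_trd x y y x, R.sym_fst_trd x y y y, R.sym_snd_fth y x y y]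
  ring_nf
  simp only [I_sq, I_pow_four]
  ring

theorem re_add_sub_pos (hR : R.PosOrthBisectional) {x y : V} (hx : x ≠ 0) (hn : ‖x‖ = ‖y‖)
    (h : inner ℂ x y = 0) : 0 < (R.R (x + y) (x + y) (x - y) (x - y)).re := by
  have hneg : inner ℂ x (-y) = 0 := by rw [inner_neg_right, h, neg_zero]
  refine hR _ _ (add_ne_zero_of_inner_eq_zero hx h) ?_
    (inner_add_sub_eq_zero_of_inner_eq_zero hn h)
  rw [sub_eq_add_neg]
  exact add_ne_zero_of_inner_eq_zero hx hneg

end KahlerCurvatureForm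

theorem stmt2 {V : Type*} [NormedAddCommGroup V] [InnerProductSpace ℂ V]
    (R : KahlerCurvatureForm V) (hR : R.PosOrthBisectional)
    (x y : V) (hx : ‖x‖ = 1) (hy : ‖y‖ = 1) (hxy : inner ℂ x y = (0 : ℂ)) :
    0 < (R.R x x x x).re + (R.R y y y y).re := by
  have hx0 : x ≠ 0 := norm_ne_zero_iff.1 (by rw [hx]; exact one_ne_zero)
  have hI : ‖I • y‖ = ‖y‖ := by rw [norm_smul, norm_I, one_mul]
  have hxIy : inner ℂ x (I • y) = 0 := by rw [inner_smul_right, hxy, mul_zero]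
  have hsum := congrArg re (R.add_sub_add_I_smul_sub_I_smul x y)
  simp only [add_re, mul_re, re_ofNat, im_ofNat, zero_mul, sub_zero] at hsum
  linarith [R.re_add_sub_pos hR hx0 (hx.trans hy.symm) hxy,
    R.re_add_sub_pos hR hx0 (hx.trans (hI.trans hy).symm) hxIy]
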